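/- arXiv:0910.5872 — 2 statements merged into one kernel-verified Lean document; each statement's English description precedes it below -/
import Mathlib

section
/- Let r_1, r_2, ..., r_{n+1} be i.i.d. nonnegative real-valued random variables with common continuous cumulative distribution function F_0. Let F_r^n(t) = (1/n) Σ_{i=1}^n 1_{r_i ≤ t} be the empirical distribution function of the first n radii, let C_n = E( sup_{t ≥ 0} | F_r^n(t) − F_0(t) | ), and let α ∈ (0,1) satisfy C_n < α. Define δ_{n+1} = inf{ t > 0 : 1 − F_r^n(t) < α − C_n } (so δ_{n+1} is a measurable function of r_1, ..., r_n). Then P( r_{n+1} > δ_{n+1} ) ≤ α. -/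
/-
The radius `δ` is a measurable function of the first `n` radii only, so it is independent of
`r n` and `P(δ < r n) = E[1 - F₀(δ)]`. Viewing `Fₙ(·, ω)` as the CDF of the empirical measure makes
it nondecreasing and right-continuous, so at the infimum `δ` of `{t > 0 | 1 - Fₙ t < α - Cₙ}` still
`1 - Fₙ(δ) ≤ α - Cₙ`; as `δ ≥ 0`, also `Fₙ(δ) - F₀(δ) ≤ sup_{t ≥ 0} |Fₙ t - F₀ t|`. Hence
`1 - F₀(δ) ≤ (α - Cₙ) + sup_{t ≥ 0} |Fₙ t - F₀ t|`, and taking expectations gives `≤ α`.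
Right-continuity of both CDFs also reduces that supremum to rational `t`, which makes it measurable.
-/

open MeasureTheory ProbabilityTheory Filter Set Topology
open scoped ENNReal

noncomputable def empiricalMeasure {α : Type*} [MeasurableSpace α] (n : ℕ) (x : ℕ → α) :
    Measure α :=
  (n : ℝ≥0∞)⁻¹ • ∑ i ∈ Finset.range n, Measure.dirac (x i)

instance isProbabilityMeasure_empiricalMeasure {α : Type*} [MeasurableSpace α] (n : ℕ)
    [NeZero n] (x : ℕ → α) : IsProbabilityMeasure (empiricalMeasure n x) :=
  ⟨by simp [empiricalMeasure, ENNReal.inv_mul_cancel (NeZero.ne (n : ℝ≥0∞))]⟩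

lemma cdf_empiricalMeasure (n : ℕ) [NeZero n] (x : ℕ → ℝ) (t : ℝ) :
    cdf (empiricalMeasure n x) t =
      (1 / n : ℝ) * ∑ i ∈ Finset.range n, if x i ≤ t then 1 else 0 := by
  rw [cdf_eq_real, measureReal_def]
  simp [empiricalMeasure, Set.indicator_apply]

lemma measurable_cdf_empiricalMeasure {Ω : Type*} {mΩ : MeasurableSpace Ω} {n : ℕ} [NeZero n]
    {r : ℕ → Ω → ℝ} (hr : ∀ i < n, Measurable (r i)) (t : ℝ) :
    Measurable fun ω => cdf (empiricalMeasure n (r · ω)) t := by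
  simp_rw [cdf_empiricalMeasure]
  refine Measurable.const_mul (Finset.measurable_sum _ fun i hi => ?_) _
  exact Measurable.ite (measurableSet_le (hr i (Finset.mem_range.1 hi)) measurable_const)
    measurable_const measurable_const

lemma le_apply_csInf_of_monotone {G : ℝ → ℝ} {s : Set ℝ} {a : ℝ} (hG : Monotone G)
    (hrc : ContinuousWithinAt G (Ici (sInf s)) (sInf s)) (hne : s.Nonempty) (hbdd : BddBelow s)
    (ha : ∀ t ∈ s, a ≤ G t) : a ≤ G (sInf s) := by
  refine ge_of_tendsto (hrc.mono Ioi_subset_Ici_self) (eventually_nhdsWithin_of_forall ?_)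
  intro u hu
  obtain ⟨t, ht, htu⟩ := (csInf_lt_iff hbdd hne).1 hu
  exact (ha t ht).trans (hG htu.le)

lemma ciSup_nonneg_rat_eq_of_rightContinuous {f : ℝ → ℝ}
    (hf : ∀ t, ContinuousWithinAt f (Ici t) t)
    (hbdd : BddAbove (range fun t : {t : ℝ // 0 ≤ t} => f t)) :
    ⨆ q : {q : ℚ // 0 ≤ (q : ℝ)}, f q = ⨆ t : {t : ℝ // 0 ≤ t}, f t := by
  have : Nonempty {q : ℚ // 0 ≤ (q : ℝ)} := ⟨⟨0, by simp⟩⟩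
  have hbddℚ : BddAbove (range fun q : {q : ℚ // 0 ≤ (q : ℝ)} => f q) :=
    hbdd.mono (range_subset_iff.2 fun q => mem_range.2 ⟨⟨q, q.2⟩, rfl⟩)
  refine le_antisymm (ciSup_le fun q => le_ciSup hbdd ⟨q, q.2⟩) (ciSup_le fun ⟨t, ht⟩ => ?_)
  obtain ⟨u, -, htu, hu⟩ := Real.exists_seq_rat_strictAnti_tendsto t
  have hlim : Tendsto (fun k => f (u k)) atTop (𝓝 (f t)) :=
    (hf t).tendsto.comp (tendsto_nhdsWithin_iff.2 ⟨hu, Eventually.of_forall fun k => (htu k).le⟩)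
  exact le_of_tendsto' hlim fun k => le_ciSup hbddℚ ⟨u k, ht.trans (htu k).le⟩

lemma measurable_csInf_of_isUpperSet {α : Type*} {mα : MeasurableSpace α} {s : α → Set ℝ}
    (hs : ∀ a, IsUpperSet (s a)) (hne : ∀ a, (s a).Nonempty) (hbdd : ∀ a, BddBelow (s a))
    (hmeas : ∀ q : ℚ, MeasurableSet {a | (q : ℝ) ∈ s a}) :
    Measurable fun a => sInf (s a) := by
  refine measurable_of_Iio fun e => ?_
  have : (fun a => sInf (s a)) ⁻¹' Iio e = ⋃ (q : ℚ) (_ : (q : ℝ) < e), {a | (q : ℝ) ∈ s a} := by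
    ext a
    simp only [mem_preimage, mem_Iio, mem_iUnion, mem_ofPred_eq, exists_prop]
    constructor
    · intro ha
      obtain ⟨t, ht, hte⟩ := (csInf_lt_iff (hbdd a) (hne a)).1 ha
      obtain ⟨q, htq, hqe⟩ := exists_rat_btwn hte
      exact ⟨q, hqe, hs a htq.le ht⟩
    · rintro ⟨q, hqe, hq⟩
      exact (csInf_le (hbdd a) hq).trans_lt hqe
  rw [this]
  exact MeasurableSet.iUnion fun q => MeasurableSet.iUnion fun _ => hmeas q

namespace ProbabilityTheory

variable {Ω : Type*} {mΩ : MeasurableSpace Ω} {P : Measure Ω}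

theorem iIndepFun.indepFun_of_measurable_iSup {ι β γ : Type*} {mβ : MeasurableSpace β}
    {mγ : MeasurableSpace γ} {X : ι → Ω → β}
    (h : iIndepFun X P) (hX : ∀ i, Measurable (X i)) {S : Set ι} {j : ι} (hj : j ∉ S)
    {Z : Ω → γ} (hZ : Measurable[⨆ i ∈ S, mβ.comap (X i)] Z) : IndepFun Z (X j) P := by
  have := indep_iSup_of_disjoint (fun i => (hX i).comap_le) ((iIndepFun_iff_iIndep _ _ _).1 h)
    (Set.disjoint_singleton_right.2 hj)
  rw [_root_.iSup_singleton] at this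
  exact (IndepFun_iff_Indep _ _ _).2 (indep_of_indep_of_le_left this hZ.comap_le)

lemma IndepFun.measureReal_lt_eq_integral_one_sub_cdf [IsProbabilityMeasure P] {X Y : Ω → ℝ}
    (h : IndepFun X Y P) (hX : Measurable X) (hY : Measurable Y) :
    P.real {ω | X ω < Y ω} = ∫ ω, 1 - cdf (P.map Y) (X ω) ∂P := by
  have hlt : MeasurableSet {p : ℝ × ℝ | p.1 < p.2} := measurableSet_lt measurable_fst measurable_snd
  have hF : Measurable fun x => 1 - cdf (P.map Y) x := (monotone_cdf _).measurable.const_sub 1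
  have hIoi (x : ℝ) : P.map Y (Ioi x) = ENNReal.ofReal (1 - cdf (P.map Y) x) := by
    have := Measure.isProbabilityMeasure_map (μ := P) hY.aemeasurable
    rw [← compl_Iic, prob_compl_eq_one_sub measurableSet_Iic, ← ofReal_cdf,
      ← ENNReal.ofReal_one, ENNReal.ofReal_sub _ (cdf_nonneg _ x)]
  have hprod : P {ω | X ω < Y ω} = (P.map X).prod (P.map Y) {p | p.1 < p.2} := by
    rw [← (indepFun_iff_map_prod_eq_prod_map_map hX.aemeasurable hY.aemeasurable).1 h,
      Measure.map_apply (hX.prodMk hY) hlt]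
    rfl
  rw [integral_eq_lintegral_of_nonneg_ae (ae_of_all _ fun ω => sub_nonneg.2 (cdf_le_one _ _))
      (hF.comp hX).aestronglyMeasurable, measureReal_def, hprod, Measure.prod_apply hlt,
    ← lintegral_map hF.ennreal_ofReal hX]
  exact congrArg ENNReal.toReal (lintegral_congr hIoi)

end ProbabilityTheory

noncomputable def ksDistNonneg (μ ν : Measure ℝ) : ℝ :=
  ⨆ t : {t : ℝ // 0 ≤ t}, |cdf μ t - cdf ν t|

/-- The paper's `δ_{n+1}`, for `μ` the empirical measure of the first `n` radii and `c = α - Cₙ`. -/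
noncomputable def safetyRadius (μ : Measure ℝ) (c : ℝ) : ℝ :=
  sInf {t | 0 < t ∧ 1 - cdf μ t < c}

section CDF

variable (μ ν : Measure ℝ)

lemma abs_cdf_sub_cdf_le_one (t : ℝ) : |cdf μ t - cdf ν t| ≤ 1 :=
  abs_sub_le_of_nonneg_of_le (cdf_nonneg μ t) (cdf_le_one μ t) (cdf_nonneg ν t) (cdf_le_one ν t)

lemma bddAbove_range_abs_cdf_sub_cdf :
    BddAbove (range fun t : {t : ℝ // 0 ≤ t} => |cdf μ t - cdf ν t|) :=
  ⟨1, forall_mem_range.2 fun t => abs_cdf_sub_cdf_le_one μ ν t⟩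

lemma abs_cdf_sub_cdf_le_ksDistNonneg {t : ℝ} (ht : 0 ≤ t) :
    |cdf μ t - cdf ν t| ≤ ksDistNonneg μ ν :=
  le_ciSup (bddAbove_range_abs_cdf_sub_cdf μ ν) ⟨t, ht⟩

lemma ksDistNonneg_nonneg : 0 ≤ ksDistNonneg μ ν :=
  (abs_nonneg _).trans (abs_cdf_sub_cdf_le_ksDistNonneg μ ν le_rfl)

lemma ksDistNonneg_le_one : ksDistNonneg μ ν ≤ 1 :=
  ciSup_le fun t => abs_cdf_sub_cdf_le_one μ ν t

lemma ksDistNonneg_eq_iSup_rat :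
    ksDistNonneg μ ν = ⨆ q : {q : ℚ // 0 ≤ (q : ℝ)}, |cdf μ q - cdf ν q| :=
  (ciSup_nonneg_rat_eq_of_rightContinuous (fun t => ((cdf μ).right_continuous t).sub
    ((cdf ν).right_continuous t) |>.abs) (bddAbove_range_abs_cdf_sub_cdf μ ν)).symm

variable {c : ℝ}

lemma isUpperSet_setOf_one_sub_cdf_lt : IsUpperSet {t | 0 < t ∧ 1 - cdf μ t < c} :=
  fun _ _ hab ha => ⟨ha.1.trans_le hab, by linarith [monotone_cdf μ hab, ha.2]⟩

lemma nonempty_setOf_one_sub_cdf_lt (hc : 0 < c) : {t | 0 < t ∧ 1 - cdf μ t < c}.Nonempty := by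
  have h : ∀ᶠ t in atTop, 1 - c < cdf μ t :=
    (tendsto_cdf_atTop μ).eventually (lt_mem_nhds (by linarith))
  obtain ⟨t, ht0, ht⟩ := ((eventually_gt_atTop 0).and h).exists
  exact ⟨t, ht0, by linarith⟩

lemma bddBelow_setOf_one_sub_cdf_lt : BddBelow {t | 0 < t ∧ 1 - cdf μ t < c} :=
  ⟨0, fun _ ht => ht.1.le⟩

lemma safetyRadius_nonneg (hc : 0 < c) : 0 ≤ safetyRadius μ c :=
  le_csInf (nonempty_setOf_one_sub_cdf_lt μ hc) fun _ ht => ht.1.le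

lemma one_sub_le_cdf_safetyRadius (hc : 0 < c) : 1 - c ≤ cdf μ (safetyRadius μ c) :=
  le_apply_csInf_of_monotone (monotone_cdf μ) ((cdf μ).right_continuous _)
    (nonempty_setOf_one_sub_cdf_lt μ hc) (bddBelow_setOf_one_sub_cdf_lt μ)
    fun _ ht => by linarith [ht.2]

lemma one_sub_cdf_safetyRadius_le (hc : 0 < c) :
    1 - cdf ν (safetyRadius μ c) ≤ c + ksDistNonneg μ ν := by
  have := abs_cdf_sub_cdf_le_ksDistNonneg μ ν (safetyRadius_nonneg μ hc)
  linarith [le_abs_self (cdf μ (safetyRadius μ c) - cdf ν (safetyRadius μ c)),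
    one_sub_le_cdf_safetyRadius μ hc]

end CDF

section Measurability

variable {Ω : Type*} {mΩ : MeasurableSpace Ω} {μ : Ω → Measure ℝ}
  (hμ : ∀ t, Measurable fun ω => cdf (μ ω) t)
include hμ

lemma measurable_ksDistNonneg (ν : Measure ℝ) : Measurable fun ω => ksDistNonneg (μ ω) ν := by
  simp_rw [ksDistNonneg_eq_iSup_rat]
  exact Measurable.iSup fun q => ((hμ q).sub measurable_const).abs

lemma integrable_ksDistNonneg (P : Measure Ω) [IsFiniteMeasure P] (ν : Measure ℝ) :
    Integrable (fun ω => ksDistNonneg (μ ω) ν) P :=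
  .of_bound (measurable_ksDistNonneg hμ ν).aestronglyMeasurable 1 (ae_of_all _ fun ω => by
    rw [Real.norm_of_nonneg (ksDistNonneg_nonneg _ _)]
    exact ksDistNonneg_le_one _ _)

lemma measurable_safetyRadius {c : ℝ} (hc : 0 < c) : Measurable fun ω => safetyRadius (μ ω) c :=
  measurable_csInf_of_isUpperSet (fun ω => isUpperSet_setOf_one_sub_cdf_lt (μ ω))
    (fun ω => nonempty_setOf_one_sub_cdf_lt (μ ω) hc)
    (fun ω => bddBelow_setOf_one_sub_cdf_lt (μ ω))
    fun q => (MeasurableSet.const _).inter (measurableSet_lt ((hμ q).const_sub 1) measurable_const)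

end Measurability

theorem safety_area_iid_general
    {Ω : Type*} [MeasurableSpace Ω] (P : Measure Ω) [IsProbabilityMeasure P]
    (n : ℕ) (hn : 0 < n)
    (r : ℕ → Ω → ℝ)
    (hmeas : ∀ i, Measurable (r i))
    (hindep : iIndepFun r P)
    (F0 : ℝ → ℝ)
    (hF0 : ∀ i t, (P {ω | r i ω ≤ t}).toReal = F0 t)
    (Fn : ℝ → Ω → ℝ)
    (hFn : ∀ t ω,
      Fn t ω = (1 / n : ℝ) * ∑ i ∈ Finset.range n, (if r i ω ≤ t then (1 : ℝ) else 0))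
    (Cn : ℝ)
    (hCn : Cn = ∫ ω, (⨆ t : {t : ℝ // 0 ≤ t}, |Fn t ω - F0 t|) ∂P)
    (α : ℝ) (hCnα : Cn < α)
    (δ : Ω → ℝ)
    (hδ : ∀ ω, δ ω = sInf {t : ℝ | 0 < t ∧ 1 - Fn t ω < α - Cn}) :
    (P {ω | δ ω < r n ω}).toReal ≤ α := by
  have : NeZero n := ⟨hn.ne'⟩
  have := Measure.isProbabilityMeasure_map (μ := P) (hmeas n).aemeasurable
  obtain rfl : F0 = cdf (P.map (r n)) := funext fun t => by
    rw [cdf_eq_real, map_measureReal_apply (hmeas n) measurableSet_Iic, ← hF0 n t]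
    rfl
  obtain rfl : Fn = fun t ω => cdf (empiricalMeasure n (r · ω)) t :=
    funext₂ fun t ω => by rw [hFn, cdf_empiricalMeasure]
  replace hδ : δ = fun ω => safetyRadius (empiricalMeasure n (r · ω)) (α - Cn) := funext hδ
  have hc : 0 < α - Cn := sub_pos.2 hCnα
  have hδ_past : Measurable[⨆ i ∈ Iio n, MeasurableSpace.comap (r i) inferInstance] δ := by
    rw [hδ]
    refine measurable_safetyRadius (measurable_cdf_empiricalMeasure fun i hi => ?_) hc
    exact (comap_measurable (r i)).mono
      (le_biSup (fun j => MeasurableSpace.comap (r j) inferInstance) hi) le_rfl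
  have hδ_meas : Measurable δ := hδ_past.mono (iSup₂_le fun i _ => (hmeas i).comap_le) le_rfl
  have hKS : Integrable (fun ω => ksDistNonneg (empiricalMeasure n (r · ω)) (P.map (r n))) P :=
    integrable_ksDistNonneg (measurable_cdf_empiricalMeasure fun i _ => hmeas i) P _
  calc P.real {ω | δ ω < r n ω}
      = ∫ ω, 1 - cdf (P.map (r n)) (δ ω) ∂P :=
        (hindep.indepFun_of_measurable_iSup hmeas (S := Iio n) (lt_irrefl n) hδ_past
          ).measureReal_lt_eq_integral_one_sub_cdf hδ_meas (hmeas n)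
    _ ≤ ∫ ω, (α - Cn) + ksDistNonneg (empiricalMeasure n (r · ω)) (P.map (r n)) ∂P :=
        integral_mono_of_nonneg (ae_of_all _ fun ω => sub_nonneg.2 (cdf_le_one _ _))
          ((integrable_const _).add hKS)
          (ae_of_all _ fun ω => hδ ▸ one_sub_cdf_safetyRadius_le _ _ hc)
    _ = α := by
        rw [integral_add (integrable_const _) hKS, integral_const]
        simp [ksDistNonneg, ← hCn]

/-- If `r 0, ..., r n` are i.i.d. nonnegative random variables with common
continuous CDF `F0`, `Fn` is the empirical CDF of the first `n` of them,
`Cn = E (sup_{t ≥ 0} |Fn t - F0 t|)`, `α ∈ (0,1)` with `Cn < α`, and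
`δ = inf {t > 0 : 1 - Fn t < α - Cn}`, then `P(r n > δ) ≤ α`. -/
theorem safety_area_iid
    {Ω : Type*} [MeasurableSpace Ω] (P : Measure Ω) [IsProbabilityMeasure P]
    (n : ℕ) (hn : 0 < n)
    (r : ℕ → Ω → ℝ)
    (hmeas : ∀ i, Measurable (r i))
    (hnonneg : ∀ i ω, 0 ≤ r i ω)
    (hindep : iIndepFun r P)
    (F0 : ℝ → ℝ) (hF0cont : Continuous F0)
    (hF0 : ∀ i t, (P {ω | r i ω ≤ t}).toReal = F0 t)
    (Fn : ℝ → Ω → ℝ)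
    (hFn : ∀ t ω,
      Fn t ω = (1 / n : ℝ) * ∑ i ∈ Finset.range n, (if r i ω ≤ t then (1 : ℝ) else 0))
    (Cn : ℝ)
    (hCn : Cn = ∫ ω, (⨆ t : {t : ℝ // 0 ≤ t}, |Fn t ω - F0 t|) ∂P)
    (α : ℝ) (hα0 : 0 < α) (hα1 : α < 1) (hCnα : Cn < α)
    (δ : Ω → ℝ)
    (hδ : ∀ ω, δ ω = sInf {t : ℝ | 0 < t ∧ 1 - Fn t ω < α - Cn}) :
    (P {ω | δ ω < r n ω}).toReal ≤ α :=
  safety_area_iid_general P n hn r hmeas hindep F0 hF0 Fn hFn Cn hCn α hCnα δ hδ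
end

section
/- Let X_1, ..., X_n be independent real-valued random variables, where X_h has cumulative distribution function F_h. Fix s ≤ t ≤ u and set Δ_h = F_h(t) − F_h(s), γ_h = F_h(u) − F_h(t), α_h = 1_{s < X_h ≤ t} − Δ_h, and β_h = 1_{t < X_h ≤ u} − γ_h. Then (1/n²) E( (Σ_{h=1}^n α_h)² (Σ_{h=1}^n β_h)² ) ≤ 2 ( (1/n) Σ_{h=1}^n Δ_h ) ( (1/n) Σ_{h=1}^n γ_h ). -/
/-!
Write `A = ∑_{h<m} α_h`, `B = ∑_{h<m} β_h` and induct on `m`, adding one independent summand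
`(a, b) = (α_m, β_m)` at a time. In the expansion of `E[(A + a)² (B + b)²]`, independence and the
vanishing of the first moments leave only
`E[A²B²] + E[A²] E[b²] + E[B²] E[a²] + 4 E[AB] E[ab] + E[a²b²]`.
So the bounds `E[A²] ≤ ∑ Δ`, `E[B²] ≤ ∑ γ`, `|E[AB]| ≤ ∑ Δ_h γ_h` and
`E[A²B²] ≤ 2 (∑ Δ) (∑ γ)` propagate, provided the cross term is absorbed:
`4 Δ_h γ_h Δ_m γ_m ≤ Δ_h γ_m + Δ_m γ_h`, which holds because `Δ_h + γ_h ≤ 1`, the two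
intervals being disjoint.
-/

open MeasureTheory ProbabilityTheory

section

variable {Ω : Type*} [MeasurableSpace Ω] {P : Measure Ω}

lemma integrable_comp_of_norm_le [IsFiniteMeasure P] {E : Type*} [NormedAddCommGroup E]
    [ProperSpace E] [MeasurableSpace E] [OpensMeasurableSpace E] {W : Ω → E} (hW : Measurable W)
    {R : ℝ} (hWR : ∀ ω, ‖W ω‖ ≤ R) {g : E → ℝ} (hg : Continuous g) :
    Integrable (fun ω => g (W ω)) P := by
  obtain ⟨C, hC⟩ := (isCompact_closedBall (0 : E) R).exists_bound_of_continuousOn hg.continuousOn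
  exact .of_bound (hg.measurable.comp hW).aestronglyMeasurable C
    (ae_of_all _ fun ω => hC _ (mem_closedBall_zero_iff.2 (hWR ω)))

lemma integral_comp_add_of_indepFun [IsFiniteMeasure P] {E ι : Type*} [Fintype ι]
    [NormedAddCommGroup E] [ProperSpace E] [MeasurableSpace E] [BorelSpace E]
    {Y Z : Ω → E} (hYZ : IndepFun Y Z P) (hY : Measurable Y) (hZ : Measurable Z)
    {R R' : ℝ} (hYR : ∀ ω, ‖Y ω‖ ≤ R) (hZR : ∀ ω, ‖Z ω‖ ≤ R') (p q : ι → E → ℝ) (f : E → ℝ)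
    (hf : ∀ y z, f (y + z) = ∑ k, p k y * q k z := by
      intro y z
      simp only [Fin.sum_univ_succ, Fin.sum_univ_zero, Matrix.cons_val_zero, Matrix.cons_val_succ,
        Prod.fst_add, Prod.snd_add]
      ring)
    (hp : ∀ k, Continuous (p k) := by intro k; fin_cases k <;> dsimp <;> fun_prop)
    (hq : ∀ k, Continuous (q k) := by intro k; fin_cases k <;> dsimp <;> fun_prop) :
    ∫ ω, f ((Y + Z) ω) ∂P = ∑ k, (∫ ω, p k (Y ω) ∂P) * ∫ ω, q k (Z ω) ∂P := by
  simp only [Pi.add_apply, hf]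
  rw [integral_finsetSum]
  · refine Finset.sum_congr rfl fun k _ => ?_
    exact (hYZ.comp (hp k).measurable (hq k).measurable).integral_fun_mul_eq_mul_integral
      ((hp k).measurable.comp hY).aestronglyMeasurable
      ((hq k).measurable.comp hZ).aestronglyMeasurable
  · intro k _
    exact integrable_comp_of_norm_le (hY.prodMk hZ) (R := max R R')
      (fun ω => max_le_max (hYR ω) (hZR ω))
      (((hp k).comp continuous_fst).mul ((hq k).comp continuous_snd))

structure PairMomentBounds (P : Measure Ω) (Y : Ω → ℝ × ℝ) (S T C : ℝ) : Prop where
  integral_fst : ∫ ω, (Y ω).1 ∂P = 0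
  integral_snd : ∫ ω, (Y ω).2 ∂P = 0
  integral_fst_sq_le : ∫ ω, (Y ω).1 ^ 2 ∂P ≤ S
  integral_snd_sq_le : ∫ ω, (Y ω).2 ^ 2 ∂P ≤ T
  abs_integral_fst_mul_snd_le : |∫ ω, (Y ω).1 * (Y ω).2 ∂P| ≤ C
  integral_fst_sq_mul_snd_sq_le : ∫ ω, (Y ω).1 ^ 2 * (Y ω).2 ^ 2 ∂P ≤ 2 * S * T

lemma PairMomentBounds.fst_bound_nonneg {Y : Ω → ℝ × ℝ} {S T C : ℝ}
    (hY : PairMomentBounds P Y S T C) : 0 ≤ S :=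
  (integral_nonneg fun _ => sq_nonneg _).trans hY.integral_fst_sq_le

lemma PairMomentBounds.snd_bound_nonneg {Y : Ω → ℝ × ℝ} {S T C : ℝ}
    (hY : PairMomentBounds P Y S T C) : 0 ≤ T :=
  (integral_nonneg fun _ => sq_nonneg _).trans hY.integral_snd_sq_le

lemma PairMomentBounds.integral_fst_sq_mul_snd_sq_add_le [IsProbabilityMeasure P]
    {Y Z : Ω → ℝ × ℝ} {S T C S' T' C' : ℝ}
    (hY : PairMomentBounds P Y S T C) (hZ : PairMomentBounds P Z S' T' C')
    (hYZ : IndepFun Y Z P) (hYm : Measurable Y) (hZm : Measurable Z)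
    {R R' : ℝ} (hYR : ∀ ω, ‖Y ω‖ ≤ R) (hZR : ∀ ω, ‖Z ω‖ ≤ R')
    (hC : 4 * C * C' ≤ S * T' + S' * T) :
    ∫ ω, ((Y + Z) ω).1 ^ 2 * ((Y + Z) ω).2 ^ 2 ∂P ≤ 2 * (S + S') * (T + T') := by
  rw [integral_comp_add_of_indepFun hYZ hYm hZm hYR hZR
    ![fun y => y.1 ^ 2 * y.2 ^ 2, fun y => y.1 ^ 2, fun y => y.2 ^ 2, fun y => 4 * (y.1 * y.2),
      fun _ => 1, fun y => 2 * (y.1 ^ 2 * y.2), fun y => 2 * (y.1 * y.2 ^ 2), fun y => 2 * y.1,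
      fun y => 2 * y.2]
    ![fun _ => 1, fun z => z.2 ^ 2, fun z => z.1 ^ 2, fun z => z.1 * z.2,
      fun z => z.1 ^ 2 * z.2 ^ 2, Prod.snd, Prod.fst, fun z => z.1 * z.2 ^ 2,
      fun z => z.1 ^ 2 * z.2]
    (fun x => x.1 ^ 2 * x.2 ^ 2)]
  simp only [Fin.sum_univ_succ, Fin.sum_univ_zero, Matrix.cons_val_zero, Matrix.cons_val_succ,
    integral_const_mul, integral_const, probReal_univ, smul_eq_mul, hY.integral_fst, hY.integral_snd,
    hZ.integral_fst, hZ.integral_snd]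
  have h₁₂ := mul_le_mul hY.integral_fst_sq_le hZ.integral_snd_sq_le
    (integral_nonneg fun _ => sq_nonneg _) hY.fst_bound_nonneg
  have h₂₁ := mul_le_mul hY.integral_snd_sq_le hZ.integral_fst_sq_le
    (integral_nonneg fun _ => sq_nonneg _) hY.snd_bound_nonneg
  have hcross := (le_abs_self _).trans ((abs_mul _ _).trans_le (mul_le_mul
    hY.abs_integral_fst_mul_snd_le hZ.abs_integral_fst_mul_snd_le (abs_nonneg _)
    ((abs_nonneg _).trans hY.abs_integral_fst_mul_snd_le)))
  linarith [hY.integral_fst_sq_mul_snd_sq_le, hZ.integral_fst_sq_mul_snd_sq_le]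

theorem PairMomentBounds.add [IsProbabilityMeasure P] {Y Z : Ω → ℝ × ℝ} {S T C S' T' C' : ℝ}
    (hY : PairMomentBounds P Y S T C) (hZ : PairMomentBounds P Z S' T' C')
    (hYZ : IndepFun Y Z P) (hYm : Measurable Y) (hZm : Measurable Z)
    {R R' : ℝ} (hYR : ∀ ω, ‖Y ω‖ ≤ R) (hZR : ∀ ω, ‖Z ω‖ ≤ R')
    (hC : 4 * C * C' ≤ S * T' + S' * T) :
    PairMomentBounds P (Y + Z) (S + S') (T + T') (C + C') := by
  constructor
  · rw [integral_comp_add_of_indepFun hYZ hYm hZm hYR hZR ![Prod.fst, fun _ => 1]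
      ![fun _ => 1, Prod.fst] Prod.fst]
    simp [hY.integral_fst, hZ.integral_fst]
  · rw [integral_comp_add_of_indepFun hYZ hYm hZm hYR hZR ![Prod.snd, fun _ => 1]
      ![fun _ => 1, Prod.snd] Prod.snd]
    simp [hY.integral_snd, hZ.integral_snd]
  · rw [integral_comp_add_of_indepFun hYZ hYm hZm hYR hZR
      ![fun y => y.1 ^ 2, fun y => 2 * y.1, fun _ => 1] ![fun _ => 1, Prod.fst, fun z => z.1 ^ 2]
      (fun x => x.1 ^ 2)]
    simpa [Fin.sum_univ_succ, hY.integral_fst, integral_const_mul]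
      using add_le_add hY.integral_fst_sq_le hZ.integral_fst_sq_le
  · rw [integral_comp_add_of_indepFun hYZ hYm hZm hYR hZR
      ![fun y => y.2 ^ 2, fun y => 2 * y.2, fun _ => 1] ![fun _ => 1, Prod.snd, fun z => z.2 ^ 2]
      (fun x => x.2 ^ 2)]
    simpa [Fin.sum_univ_succ, hY.integral_snd, integral_const_mul]
      using add_le_add hY.integral_snd_sq_le hZ.integral_snd_sq_le
  · rw [integral_comp_add_of_indepFun hYZ hYm hZm hYR hZR
      ![fun y => y.1 * y.2, Prod.fst, Prod.snd, fun _ => 1]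
      ![fun _ => 1, Prod.snd, Prod.fst, fun z => z.1 * z.2] (fun x => x.1 * x.2)]
    simpa [Fin.sum_univ_succ, hY.integral_fst, hY.integral_snd] using (abs_add_le _ _).trans
      (add_le_add hY.abs_integral_fst_mul_snd_le hZ.abs_integral_fst_mul_snd_le)
  · exact hY.integral_fst_sq_mul_snd_sq_add_le hZ hYZ hYm hZm hYR hZR hC

lemma integral_comp_indicator_indicator [IsProbabilityMeasure P] {E F : Set Ω}
    (hE : MeasurableSet E) (hF : MeasurableSet F) (hEF : Disjoint E F) (f : ℝ × ℝ → ℝ) :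
    ∫ ω, f (E.indicator 1 ω, F.indicator 1 ω) ∂P
      = f (1, 0) * P.real E + f (0, 1) * P.real F + f (0, 0) * (1 - P.real E - P.real F) := by
  have hpt (ω : Ω) : f (E.indicator 1 ω, F.indicator 1 ω) = (f (1, 0) - f (0, 0)) * E.indicator 1 ω
      + (f (0, 1) - f (0, 0)) * F.indicator 1 ω + f (0, 0) := by
    by_cases hωE : ω ∈ E
    · simp [hωE, hEF.notMem_of_mem_left hωE]
    · by_cases hωF : ω ∈ F <;> simp [hωE, hωF]
  have hiE : Integrable (E.indicator (1 : Ω → ℝ)) P := (integrable_const 1).indicator hE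
  have hiF : Integrable (F.indicator (1 : Ω → ℝ)) P := (integrable_const 1).indicator hF
  simp_rw [hpt]
  rw [integral_add _ (integrable_const _), integral_add (hiE.const_mul _) (hiF.const_mul _),
    integral_const_mul, integral_const_mul, integral_indicator_one hE, integral_indicator_one hF]
  · simp only [integral_const, probReal_univ, smul_eq_mul]
    ring
  · exact (hiE.const_mul _).add (hiF.const_mul _)

lemma measureReal_add_le_one_of_disjoint [IsProbabilityMeasure P] {E F : Set Ω}
    (hEF : Disjoint E F) (hF : MeasurableSet F) : P.real E + P.real F ≤ 1 := by
  rw [← measureReal_union hEF hF]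
  exact measureReal_le_one

theorem pairMomentBounds_indicator_sub [IsProbabilityMeasure P] {E F : Set Ω}
    (hE : MeasurableSet E) (hF : MeasurableSet F) (hEF : Disjoint E F) :
    PairMomentBounds P (fun ω => (E.indicator 1 ω - P.real E, F.indicator 1 ω - P.real F))
      (P.real E) (P.real F) (P.real E * P.real F) := by
  have hp : 0 ≤ P.real E := measureReal_nonneg
  have hq : 0 ≤ P.real F := measureReal_nonneg
  have hpq := measureReal_add_le_one_of_disjoint (P := P) hEF hF
  have h := integral_comp_indicator_indicator (P := P) hE hF hEF
  constructor
  · exact (h fun x => x.1 - P.real E).trans (by ring)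
  · exact (h fun x => x.2 - P.real F).trans (by ring)
  · exact (h fun x => (x.1 - P.real E) ^ 2).trans_le (by nlinarith)
  · exact (h fun x => (x.2 - P.real F) ^ 2).trans_le (by nlinarith)
  · rw [h fun x => (x.1 - P.real E) * (x.2 - P.real F)]
    exact (abs_of_nonpos (by nlinarith)).trans_le (by nlinarith)
  · refine (h fun x => (x.1 - P.real E) ^ 2 * (x.2 - P.real F) ^ 2).trans_le ?_
    set p := P.real E
    set q := P.real F
    have hB : q * (1 - p) ^ 2 + p * (1 - q) ^ 2 + p * q * (1 - p - q) ≤ 2 := by nlinarith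
    nlinarith [mul_nonneg (mul_nonneg hp hq) (sub_nonneg.2 hB)]

lemma four_mul_mul_le_of_add_le_one {x y x' y' : ℝ} (hx : 0 ≤ x) (hy : 0 ≤ y) (hx' : 0 ≤ x')
    (hy' : 0 ≤ y') (h : x + y ≤ 1) (h' : x' + y' ≤ 1) :
    4 * (x * y) * (x' * y') ≤ x * y' + x' * y := by
  have hle : x * y' + x' * y ≤ 1 := by nlinarith
  nlinarith [sq_nonneg (x * y' - x' * y),
    mul_nonneg (add_nonneg (mul_nonneg hx hy') (mul_nonneg hx' hy)) (sub_nonneg.2 hle)]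

theorem pairMomentBounds_sum [IsProbabilityMeasure P] {Z : ℕ → Ω → ℝ × ℝ}
    (hZ : iIndepFun Z P) (hZm : ∀ h, Measurable (Z h)) {R : ℝ} (hZR : ∀ h ω, ‖Z h ω‖ ≤ R)
    {S T : ℕ → ℝ} (hST : ∀ h, S h + T h ≤ 1)
    (hmom : ∀ h, PairMomentBounds P (Z h) (S h) (T h) (S h * T h)) (m : ℕ) :
    PairMomentBounds P (∑ h ∈ Finset.range m, Z h) (∑ h ∈ Finset.range m, S h)
      (∑ h ∈ Finset.range m, T h) (∑ h ∈ Finset.range m, S h * T h) := by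
  induction m with
  | zero => constructor <;> simp
  | succ m ih =>
    have hcross : 4 * (∑ h ∈ Finset.range m, S h * T h) * (S m * T m)
        ≤ (∑ h ∈ Finset.range m, S h) * T m + S m * ∑ h ∈ Finset.range m, T h := by
      calc 4 * (∑ h ∈ Finset.range m, S h * T h) * (S m * T m)
          = ∑ h ∈ Finset.range m, 4 * (S h * T h) * (S m * T m) := by
            rw [Finset.mul_sum, Finset.sum_mul]
        _ ≤ ∑ h ∈ Finset.range m, (S h * T m + S m * T h) := Finset.sum_le_sum fun h _ =>
            four_mul_mul_le_of_add_le_one (hmom h).fst_bound_nonneg (hmom h).snd_bound_nonneg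
              (hmom m).fst_bound_nonneg (hmom m).snd_bound_nonneg (hST h) (hST m)
        _ = _ := by rw [Finset.sum_add_distrib, Finset.sum_mul, Finset.mul_sum]
    simp only [Finset.sum_range_succ]
    refine ih.add (hmom m) (hZ.indepFun_finsetSum_of_notMem hZm (by simp))
      (by fun_prop) (hZm m) (R := ∑ h ∈ Finset.range m, R)
      (fun ω => ?_) (hZR m) hcross
    rw [Finset.sum_apply]
    exact (norm_sum_le _ _).trans (Finset.sum_le_sum fun h _ => hZR h ω)

lemma measureReal_preimage_Ioc [IsFiniteMeasure P] {X : Ω → ℝ} (hX : Measurable X) {a b : ℝ}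
    (hab : a ≤ b) :
    P.real (X ⁻¹' Set.Ioc a b) = P.real {ω | X ω ≤ b} - P.real {ω | X ω ≤ a} := by
  rw [← Set.Iic_sdiff_Iic, Set.preimage_sdiff,
    measureReal_sdiff (Set.preimage_mono (Set.Iic_subset_Iic.2 hab)) (hX measurableSet_Iic)]
  rfl

lemma abs_indicator_one_sub_le_one {α : Type*} (A : Set α) {p : ℝ} (hp₀ : 0 ≤ p) (hp₁ : p ≤ 1)
    (x : α) : |A.indicator 1 x - p| ≤ 1 := by
  rw [abs_le]
  by_cases hx : x ∈ A
  · rw [Set.indicator_of_mem hx, Pi.one_apply]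
    constructor <;> linarith
  · rw [Set.indicator_of_notMem hx]
    constructor <;> linarith

lemma norm_indicator_sub_indicator_sub_le_one {α : Type*} (A B : Set α) {p q : ℝ} (hp : 0 ≤ p)
    (hq : 0 ≤ q) (hpq : p + q ≤ 1) (x : α) :
    ‖(A.indicator 1 x - p, B.indicator 1 x - q)‖ ≤ 1 :=
  max_le (abs_indicator_one_sub_le_one A hp (by linarith) x)
    (abs_indicator_one_sub_le_one B hq (by linarith) x)

end

theorem empirical_fourth_moment_bound_general
    {Ω : Type*} [MeasurableSpace Ω] (P : Measure Ω) [IsProbabilityMeasure P]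
    (n : ℕ)
    (X : ℕ → Ω → ℝ) (hmeas : ∀ i, Measurable (X i))
    (hindep : iIndepFun X P)
    (F : ℕ → ℝ → ℝ)
    (hF : ∀ i x, F i x = (P {ω | X i ω ≤ x}).toReal)
    (s t u : ℝ) (hst : s ≤ t) (htu : t ≤ u)
    (Δ γ : ℕ → ℝ)
    (hΔ : ∀ h, Δ h = F h t - F h s) (hγ : ∀ h, γ h = F h u - F h t)
    (α β : ℕ → Ω → ℝ)
    (hα : ∀ h ω, α h ω = (if s < X h ω ∧ X h ω ≤ t then (1 : ℝ) else 0) - Δ h)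
    (hβ : ∀ h ω, β h ω = (if t < X h ω ∧ X h ω ≤ u then (1 : ℝ) else 0) - γ h) :
    (1 / (n : ℝ) ^ 2) *
        ∫ ω, (∑ h ∈ Finset.range n, α h ω) ^ 2 * (∑ h ∈ Finset.range n, β h ω) ^ 2 ∂P
      ≤ 2 * ((1 / n : ℝ) * ∑ h ∈ Finset.range n, Δ h) *
          ((1 / n : ℝ) * ∑ h ∈ Finset.range n, γ h) := by
  have hΔP (h : ℕ) : Δ h = P.real (X h ⁻¹' Set.Ioc s t) := by
    rw [hΔ, hF, hF, measureReal_preimage_Ioc (hmeas h) hst]; rfl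
  have hγP (h : ℕ) : γ h = P.real (X h ⁻¹' Set.Ioc t u) := by
    rw [hγ, hF, hF, measureReal_preimage_Ioc (hmeas h) htu]; rfl
  have hdisj (h : ℕ) : Disjoint (X h ⁻¹' Set.Ioc s t) (X h ⁻¹' Set.Ioc t u) :=
    (Set.Ioc_disjoint_Ioc_of_le le_rfl).preimage _
  let φ (h : ℕ) (x : ℝ) : ℝ × ℝ :=
    ((Set.Ioc s t).indicator 1 x - Δ h, (Set.Ioc t u).indicator 1 x - γ h)
  have hmom (h : ℕ) : PairMomentBounds P (fun ω => φ h (X h ω)) (Δ h) (γ h) (Δ h * γ h) := by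
    simp only [φ, hΔP, hγP]
    exact pairMomentBounds_indicator_sub (hmeas h measurableSet_Ioc) (hmeas h measurableSet_Ioc)
      (hdisj h)
  have hST (h : ℕ) : Δ h + γ h ≤ 1 := by
    rw [hΔP, hγP]
    exact measureReal_add_le_one_of_disjoint (hdisj h) (hmeas h measurableSet_Ioc)
  have hφ (h : ℕ) : Measurable (φ h) := by measurability
  have key := (pairMomentBounds_sum (hindep.comp φ hφ) (fun h => (hφ h).comp (hmeas h))
    (fun h ω => norm_indicator_sub_indicator_sub_le_one _ _ (hmom h).fst_bound_nonneg
      (hmom h).snd_bound_nonneg (hST h) (X h ω)) hST hmom n).integral_fst_sq_mul_snd_sq_le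
  simp only [Finset.sum_apply, Prod.fst_sum, Prod.snd_sum, Function.comp, φ, Set.indicator_apply,
    Set.mem_Ioc, Pi.one_apply] at key
  simp only [hα, hβ]
  calc _ ≤ 1 / (n : ℝ) ^ 2 * (2 * (∑ h ∈ Finset.range n, Δ h) * ∑ h ∈ Finset.range n, γ h) :=
        mul_le_mul_of_nonneg_left key (by positivity)
    _ = _ := by ring

/-- Fourth-moment bound. For independent real random variables `X h` with CDFs
`F h`, `s ≤ t ≤ u`, `Δ_h = F h t - F h s`, `γ_h = F h u - F h t`,
`α_h = 1_{s < X h ≤ t} - Δ_h` and `β_h = 1_{t < X h ≤ u} - γ_h`, one has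
`(1/n²) E((∑ α_h)² (∑ β_h)²) ≤ 2 ((1/n) ∑ Δ_h) ((1/n) ∑ γ_h)`. -/
theorem empirical_fourth_moment_bound
    {Ω : Type*} [MeasurableSpace Ω] (P : Measure Ω) [IsProbabilityMeasure P]
    (n : ℕ) (hn : 0 < n)
    (X : ℕ → Ω → ℝ) (hmeas : ∀ i, Measurable (X i))
    (hindep : iIndepFun X P)
    (F : ℕ → ℝ → ℝ)
    (hF : ∀ i x, F i x = (P {ω | X i ω ≤ x}).toReal)
    (s t u : ℝ) (hst : s ≤ t) (htu : t ≤ u)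
    (Δ γ : ℕ → ℝ)
    (hΔ : ∀ h, Δ h = F h t - F h s) (hγ : ∀ h, γ h = F h u - F h t)
    (α β : ℕ → Ω → ℝ)
    (hα : ∀ h ω, α h ω = (if s < X h ω ∧ X h ω ≤ t then (1 : ℝ) else 0) - Δ h)
    (hβ : ∀ h ω, β h ω = (if t < X h ω ∧ X h ω ≤ u then (1 : ℝ) else 0) - γ h) :
    (1 / (n : ℝ) ^ 2) *
        ∫ ω, (∑ h ∈ Finset.range n, α h ω) ^ 2 * (∑ h ∈ Finset.range n, β h ω) ^ 2 ∂P
      ≤ 2 * ((1 / n : ℝ) * ∑ h ∈ Finset.range n, Δ h) *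
          ((1 / n : ℝ) * ∑ h ∈ Finset.range n, γ h) :=
  empirical_fourth_moment_bound_general P n X hmeas hindep F hF s t u hst htu Δ γ hΔ hγ α β hα hβ
end
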